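/- arXiv:math/0609698 — 5 statements merged into one kernel-verified Lean document; each statement's English description precedes it below -/
import Mathlib

section
/- Let P = (V_0, …, V_{n-1}) be a polygon in ℝ² with n ≥ 5 (the vertices are not assumed distinct). If the reduced polygon P^(α) is convex for every α ∈ {0, …, n-1}, then P is convex. -/
/-!
Let `H` be the convex hull of the vertices. An edge `[V_i, V_{i+1}]` with `V_i ≠ V_{i+1}` is an
edge of `P^(δ)` for each of the `n - 2 ≥ 3` indices `δ ∉ {i, i+1}`, so the line through it
supports the hull of all vertices but `V_δ`. Two of these three half-planes lie on the same side
of the line, and together they contain every vertex; hence the line supports `H` and the edge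
lies in `∂H`. A degenerate edge is a single vertex, which lies on a nondegenerate edge unless
`H` is a point.

Conversely, a point `p ∈ ∂H` lies on a segment `[V_a, V_b]` contained in a supporting line `ℓ`.
If `p` were on no edge of `P`, then for every `α ∉ {a, b}` the point `p ∈ ∂(conv P^(α))` would
lie on the new edge `[V_{α-1}, V_{α+1}]` of `P^(α)`; this forces `V_{α±1} ∈ ℓ` and `V_α ∉ ℓ`, as
otherwise `p ∈ [V_{α-1}, V_α] ∪ [V_α, V_{α+1}]`. Since `n ≥ 5`, some two consecutive indices
avoid `{a, b}`, which is a contradiction.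
-/

open Set

noncomputable section

/-- The Euclidean plane. -/
abbrev Pl := EuclideanSpace ℝ (Fin 2)

/-- The `j`-th vertex of the polygon given by the list `L`, with indices taken
cyclically (so that `V_n = V_0`). -/
def vtx (L : List Pl) (j : ℕ) : Pl := L.getD (j % L.length) 0

/-- The set of vertices of the polygon `L`. -/
def vertexSet (L : List Pl) : Set Pl := {x | x ∈ L}

/-- The union of the edges `[V_i, V_{i+1}]`, `i = 0, …, n-1` (with `V_n = V_0`). -/
def edg (L : List Pl) : Set Pl :=
  ⋃ i ∈ Finset.range L.length, segment ℝ (vtx L i) (vtx L (i + 1))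

/-- A polygon is convex if the union of its edges coincides with the boundary of
the convex hull of its vertex set. -/
def IsConvexPolygon (L : List Pl) : Prop :=
  edg L = frontier (convexHull ℝ (vertexSet L))

/-- A polygon is quasi-convex if the union of its edges is contained in the boundary
of the convex hull of its vertex set. -/
def IsQuasiConvex (L : List Pl) : Prop :=
  edg L ⊆ frontier (convexHull ℝ (vertexSet L))

/-- A polygon is strict if any three of its vertices (with increasing indices)
are non-collinear. -/
def IsStrict (L : List Pl) : Prop :=
  ∀ i j k : ℕ, i < j → j < k → k < L.length →
    ¬ Collinear ℝ ({vtx L i, vtx L j, vtx L k} : Set Pl)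

/-- The points of `S` lie to one side of the segment `[A, B]`: there is a line
(the zero set of `f · = c` with `f ≠ 0`) containing `A` and `B` which is the
boundary of a closed half-plane `{x | f x ≤ c}` containing `S`. -/
def OneSide (A B : Pl) (S : Set Pl) : Prop :=
  ∃ (f : Pl →ₗ[ℝ] ℝ) (c : ℝ), f ≠ 0 ∧ f A = c ∧ f B = c ∧ ∀ p ∈ S, f p ≤ c

/-- `ℓ` is a line in the plane. -/
def IsLine (ℓ : Set Pl) : Prop :=
  ∃ (f : Pl →ₗ[ℝ] ℝ) (c : ℝ), f ≠ 0 ∧ ℓ = {x | f x = c}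

/-- The line `ℓ` is supporting to the set `S`: it meets `S` and is the boundary of
a closed half-plane containing `S`. -/
def IsSuppLine (ℓ S : Set Pl) : Prop :=
  (ℓ ∩ S).Nonempty ∧
    ∃ (f : Pl →ₗ[ℝ] ℝ) (c : ℝ), f ≠ 0 ∧ ℓ = {x | f x = c} ∧ ∀ x ∈ S, f x ≤ c

/-- The half-open segment `[A, B) = {(1-t)A + tB : 0 ≤ t < 1}` if `A ≠ B`,
and `∅` if `A = B`. -/
def hseg (A B : Pl) : Set Pl :=
  {x | A ≠ B ∧ ∃ t : ℝ, 0 ≤ t ∧ t < 1 ∧ x = (1 - t) • A + t • B}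

/-- A 2-polytope: a compact convex subset of the plane of dimension 2 whose set of
extreme points is finite. -/
def IsPolytope2 (K : Set Pl) : Prop :=
  IsCompact K ∧ Convex ℝ K ∧
    Module.finrank ℝ (affineSpan ℝ K).direction = 2 ∧
    (Set.extremePoints ℝ K).Finite

theorem IsMaxOn.union {α β : Type*} [Preorder β] {f : α → β} {s t : Set α} {a : α}
    (hs : IsMaxOn f s a) (ht : IsMaxOn f t a) : IsMaxOn f (s ∪ t) a :=
  union_subset hs ht

theorem IsMinOn.union {α β : Type*} [Preorder β] {f : α → β} {s t : Set α} {a : α}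
    (hs : IsMinOn f s a) (ht : IsMinOn f t a) : IsMinOn f (s ∪ t) a :=
  union_subset hs ht

section LinearAlgebra

variable {K V : Type*} [Field K] [AddCommGroup V] [Module K V]
  {f g : V →ₗ[K] K} {d : V}

theorem LinearMap.ker_eq_span_singleton_of_finrank_eq_two (hV : Module.finrank K V = 2)
    (hf : f ≠ 0) (hd : d ≠ 0) (hfd : f d = 0) : LinearMap.ker f = K ∙ d := by
  have := Module.finite_of_finrank_eq_succ hV
  refine (Submodule.eq_of_le_of_finrank_eq ?_ ?_).symm
  · rwa [Submodule.span_singleton_le_iff_mem]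
  · have := Module.Dual.finrank_ker_add_one_of_ne_zero hf
    rw [finrank_span_singleton hd]
    omega

theorem LinearMap.exists_eq_smul_of_finrank_eq_two (hV : Module.finrank K V = 2)
    (hf : f ≠ 0) (hd : d ≠ 0) (hfd : f d = 0) (hgd : g d = 0) : ∃ c : K, g = c • f := by
  have hker : ⨅ _ : Unit, LinearMap.ker f ≤ LinearMap.ker g := by
    rw [ciInf_const, ker_eq_span_singleton_of_finrank_eq_two hV hf hd hfd,
      Submodule.span_singleton_le_iff_mem]
    exact hgd
  obtain ⟨c, hc⟩ :=
    Submodule.mem_span_singleton.1 (by simpa using mem_span_of_iInf_ker_le_ker hker)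
  exact ⟨c, hc.symm⟩

theorem LinearMap.exists_injective_prod_of_finrank_eq_two (hV : Module.finrank K V = 2)
    (hf : f ≠ 0) : ∃ g : V →ₗ[K] K, Function.Injective (f.prod g) := by
  have := Module.finite_of_finrank_eq_succ hV
  have hker : LinearMap.ker f ≠ ⊥ := by
    intro h
    have := Module.Dual.finrank_ker_add_one_of_ne_zero hf
    rw [h, finrank_bot] at this
    omega
  obtain ⟨d, hdf, hd⟩ := Submodule.exists_mem_ne_zero_of_ne_bot hker
  obtain ⟨g, hgd⟩ : ∃ g : V →ₗ[K] K, g d ≠ 0 := by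
    by_contra! h
    exact hd ((Module.forall_dual_apply_eq_zero_iff K d).1 h)
  refine ⟨g, (injective_iff_map_eq_zero _).2 fun x hx => ?_⟩
  have hxf : x ∈ LinearMap.ker f := congrArg Prod.fst hx
  rw [ker_eq_span_singleton_of_finrank_eq_two hV hf hd hdf] at hxf
  obtain ⟨t, rfl⟩ := Submodule.mem_span_singleton.1 hxf
  have hxg : t * g d = 0 := by simpa using congrArg Prod.snd hx
  simp [(mul_eq_zero.1 hxg).resolve_right hgd]

theorem LinearMap.exists_ne_zero_apply_eq (hV : 1 < Module.finrank K V) (a b : V) :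
    ∃ r : V →ₗ[K] K, r ≠ 0 ∧ r a = r b := by
  have hlt : K ∙ (b - a) < ⊤ := by
    refine Submodule.lt_top_of_finrank_lt_finrank ?_
    have := finrank_span_le_card (R := K) ({b - a} : Set V)
    simp only [Set.toFinset_singleton, Finset.card_singleton] at this
    omega
  obtain ⟨r, hr, hker⟩ := Submodule.exists_le_ker_of_lt_top _ hlt
  refine ⟨r, hr, ?_⟩
  have : r (b - a) = 0 := hker (Submodule.mem_span_singleton_self _)
  rw [map_sub, sub_eq_zero] at this
  exact this.symm

end LinearAlgebra

section Segment

variable {F : Type*} [AddCommGroup F] [Module ℝ F]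

theorem LinearMap.apply_eq_of_mem_segment (f : F →ₗ[ℝ] ℝ) {a b x : F} (hab : f a = f b)
    (hx : x ∈ segment ℝ a b) : f x = f a := by
  obtain ⟨s, t, -, -, hst, rfl⟩ := hx
  rw [map_add, map_smul, map_smul, ← hab, smul_eq_mul, smul_eq_mul, ← add_mul, hst, one_mul]

theorem LinearMap.mem_uIcc_of_mem_segment (g : F →ₗ[ℝ] ℝ) {a b x : F}
    (hx : x ∈ segment ℝ a b) : g x ∈ uIcc (g a) (g b) := by
  rw [← segment_eq_uIcc]
  exact (image_segment ℝ g.toAffineMap a b).subset (mem_image_of_mem g hx)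

theorem LinearMap.mem_segment_of_injective_prod {f g : F →ₗ[ℝ] ℝ}
    (hfg : Function.Injective (f.prod g)) {a b p : F} (ha : f a = f p) (hb : f b = f p)
    (hp : g p ∈ uIcc (g a) (g b)) : p ∈ segment ℝ a b := by
  rw [← segment_eq_uIcc] at hp
  obtain ⟨q, hq, hqp⟩ := (image_segment ℝ g.toAffineMap a b).symm.subset hp
  have hfq : f q = f p := (f.apply_eq_of_mem_segment (ha.trans hb.symm) hq).trans ha
  rwa [← hfg (Prod.ext hfq hqp)]

theorem LinearMap.apply_eq_of_mem_openSegment_of_le (f : F →ₗ[ℝ] ℝ) {a b p : F}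
    (hp : p ∈ openSegment ℝ a b) (ha : f a ≤ f p) (hb : f b ≤ f p) :
    f a = f p ∧ f b = f p := by
  obtain ⟨s, t, hs, ht, hst, rfl⟩ := hp
  simp only [map_add, map_smul, smul_eq_mul] at ha hb ⊢
  obtain rfl : s = 1 - t := by linarith
  have hab : f a = f b := le_antisymm (by nlinarith) (by nlinarith)
  rw [← hab, ← add_mul, hst, one_mul]
  exact ⟨rfl, rfl⟩

theorem segment_subset_union_of_apply_eq (hF : Module.finrank ℝ F = 2) {f : F →ₗ[ℝ] ℝ}
    (hf : f ≠ 0) {a b c : F} (ha : f a = f b) (hc : f c = f b) :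
    segment ℝ a c ⊆ segment ℝ a b ∪ segment ℝ b c := by
  obtain ⟨g, hfg⟩ := f.exists_injective_prod_of_finrank_eq_two hF hf
  intro p hp
  have hfp : f p = f b := (f.apply_eq_of_mem_segment (ha.trans hc.symm) hp).trans ha
  rcases uIcc_subset_uIcc_union_uIcc (g.mem_uIcc_of_mem_segment hp) with h | h
  · exact .inl (LinearMap.mem_segment_of_injective_prod hfg (ha.trans hfp.symm) hfp.symm h)
  · exact .inr (LinearMap.mem_segment_of_injective_prod hfg hfp.symm (hc.trans hfp.symm) h)

theorem LinearMap.isExtrOn_convexHull (f : F →ₗ[ℝ] ℝ) {s : Set F} {x : F}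
    (h : IsExtrOn f s x) : IsExtrOn f (convexHull ℝ s) x :=
  h.imp (fun h => convexHull_min h (convex_halfSpace_ge f.isLinear _))
    (fun h => convexHull_min h (convex_halfSpace_le f.isLinear _))

end Segment

section Convex

variable {E : Type*} [NormedAddCommGroup E] [NormedSpace ℝ E] [FiniteDimensional ℝ E]

theorem LinearMap.notMem_interior_of_isExtrOn {f : E →ₗ[ℝ] ℝ} (hf : f ≠ 0) {K : Set E} {x : E}
    (h : IsExtrOn f K x) : x ∉ interior K := by
  intro hx
  have hderiv := (h.isLocalExtr (mem_interior_iff_mem_nhds.1 hx)).hasFDerivAt_eq_zero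
    (LinearMap.toContinuousLinearMap f).hasFDerivAt
  exact hf (LinearMap.toContinuousLinearMap.injective (by simpa using hderiv))

theorem Convex.exists_isMaxOn_of_notMem_interior {K : Set E} (hK : Convex ℝ K) {x : E}
    (hx : x ∈ K) (hxK : x ∉ interior K) : ∃ f : E →ₗ[ℝ] ℝ, f ≠ 0 ∧ IsMaxOn f K x := by
  by_cases hint : (interior K).Nonempty
  · obtain ⟨f, u, hf, hfK, hfx⟩ := geometric_hahn_banach_of_nonempty_interior hK
      (convex_singleton x) (disjoint_singleton_right.2 hxK) hint (singleton_nonempty x)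
    exact ⟨f, fun h => hf (ContinuousLinearMap.coe_injective h),
      fun y hy => (hfK y hy).trans (hfx x rfl)⟩
  · have hdir : (affineSpan ℝ K).direction < ⊤ := by
      rw [lt_top_iff_ne_top, Ne,
        AffineSubspace.direction_eq_top_iff_of_nonempty ⟨x, subset_affineSpan ℝ K hx⟩,
        ← hK.interior_nonempty_iff_affineSpan_eq_top]
      exact hint
    obtain ⟨f, hf, hdirf⟩ := Submodule.exists_le_ker_of_lt_top _ hdir
    refine ⟨f, hf, isMaxOn_iff.2 fun y hy => le_of_eq ?_⟩
    have : y - x ∈ LinearMap.ker f := hdirf (AffineSubspace.vsub_mem_direction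
      (subset_affineSpan ℝ K hy) (subset_affineSpan ℝ K hx))
    simpa [sub_eq_zero] using this

/-- The face of `convexHull ℝ s` exposed by `f` is, by Krein–Milman, the closed convex hull of its
extreme points, and these are points of `s`. -/
theorem mem_convexHull_inter_of_isMaxOn {s : Set E} (hs : s.Finite) {f : E →ₗ[ℝ] ℝ} {p : E}
    (hp : p ∈ convexHull ℝ s) (hmax : IsMaxOn f (convexHull ℝ s) p) :
    p ∈ convexHull ℝ (s ∩ {x | f x = f p}) := by
  set B := (LinearMap.toContinuousLinearMap f).toExposed (convexHull ℝ s)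
  have hB : IsExposed ℝ (convexHull ℝ s) B := ContinuousLinearMap.toExposed.isExposed
  have hpB : p ∈ B := ⟨hp, fun y hy => hmax hy⟩
  have hext : extremePoints ℝ B ⊆ s ∩ {x | f x = f p} := fun x hx => by
    have hxB : x ∈ B := extremePoints_subset hx
    refine ⟨extremePoints_convexHull_subset
      (hB.isExtreme.extremePoints_subset_extremePoints hx), ?_⟩
    exact le_antisymm (hmax hxB.1) (hxB.2 p hp)
  rw [← ((hs.inter_of_left _).isClosed_convexHull ℝ).closure_eq]
  rw [← closure_convexHull_extremePoints (hB.isCompact (hs.isCompact_convexHull ℝ))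
    (hB.convex (convex_convexHull ℝ s))] at hpB
  exact closure_mono (convexHull_mono hext) hpB

theorem exists_mem_segment_of_isMaxOn (hE : Module.finrank ℝ E = 2) {s : Set E}
    (hs : s.Finite) {f : E →ₗ[ℝ] ℝ} (hf : f ≠ 0) {p : E} (hp : p ∈ convexHull ℝ s)
    (hmax : IsMaxOn f (convexHull ℝ s) p) : ∃ a ∈ s, ∃ b ∈ s, p ∈ segment ℝ a b := by
  obtain ⟨g, hfg⟩ := f.exists_injective_prod_of_finrank_eq_two hE hf
  set t := s ∩ {x | f x = f p}
  have hpt : p ∈ convexHull ℝ t := mem_convexHull_inter_of_isMaxOn hs hp hmax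
  have ht : t.Nonempty := convexHull_nonempty_iff.1 ⟨p, hpt⟩
  obtain ⟨a, hat, ha⟩ := Set.exists_min_image t g (hs.inter_of_left _) ht
  obtain ⟨b, hbt, hb⟩ := Set.exists_max_image t g (hs.inter_of_left _) ht
  have hts : t ⊆ segment ℝ a b := fun x hx => LinearMap.mem_segment_of_injective_prod hfg
    (hat.2.trans hx.2.symm) (hbt.2.trans hx.2.symm) (Icc_subset_uIcc ⟨ha x hx, hb x hx⟩)
  exact ⟨a, hat.1, b, hbt.1, convexHull_min hts (convex_segment a b) hpt⟩

theorem Convex.isMaxOn_or_isMinOn_of_midpoint_notMem_interior (hE : Module.finrank ℝ E = 2)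
    {K : Set E} (hK : Convex ℝ K) {a b : E} (ha : a ∈ K) (hb : b ∈ K) (hab : a ≠ b)
    (hmid : midpoint ℝ a b ∉ interior K) {r : E →ₗ[ℝ] ℝ} (hr : r ≠ 0) (hrab : r a = r b) :
    IsMaxOn r K a ∨ IsMinOn r K a := by
  obtain ⟨f, hf, hfmax⟩ := hK.exists_isMaxOn_of_notMem_interior
    (hK.segment_subset ha hb (midpoint_mem_segment a b)) hmid
  replace hfmax := isMaxOn_iff.1 hfmax
  have hfmid : f (midpoint ℝ a b) = (f a + f b) / 2 := by
    rw [midpoint_eq_smul_add, map_smul, map_add, smul_eq_mul, invOf_eq_inv]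
    ring
  have hfa : f a = f (midpoint ℝ a b) := le_antisymm (hfmax a ha) (by linarith [hfmax b hb])
  have hfb : f b = f (midpoint ℝ a b) := le_antisymm (hfmax b hb) (by linarith [hfmax a ha])
  obtain ⟨c, rfl⟩ := r.exists_eq_smul_of_finrank_eq_two hE hr (sub_ne_zero.2 hab.symm)
    (by rw [map_sub, hrab, sub_self]) (by rw [map_sub, hfa, hfb, sub_self])
  have hmax : ∀ y ∈ K, c * r y ≤ c * r a := fun y hy => by
    simpa using (hfmax y hy).trans_eq hfa.symm
  rcases lt_trichotomy c 0 with hc | rfl | hc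
  · exact .inr (isMinOn_iff.2 fun y hy => (mul_le_mul_left_of_neg hc).1 (hmax y hy))
  · exact absurd (zero_smul ℝ r) hf
  · exact .inl (isMaxOn_iff.2 fun y hy => le_of_mul_le_mul_left (hmax y hy) hc)

end Convex

theorem exists_consecutive_pair_avoiding {n : ℕ} (hn : 5 ≤ n) (a b : ℕ) :
    ∃ α < n, α ≠ a ∧ α ≠ b ∧ (α + 1) % n ≠ a ∧ (α + 1) % n ≠ b := by
  by_cases h : ∃ α, α + 1 < n ∧ α ≠ a ∧ α ≠ b ∧ α + 1 ≠ a ∧ α + 1 ≠ b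
  · obtain ⟨α, hα, h⟩ := h
    exact ⟨α, by omega, by rwa [Nat.mod_eq_of_lt hα]⟩
  · -- `{a, b}` meets each of the pairs `(0, 1), …, (3, 4)`, so it is `{1, 3}`.
    refine ⟨n - 1, by omega, ?_⟩
    rw [Nat.sub_add_cancel (by omega), Nat.mod_self]
    have h₀ := not_exists.1 h 0
    have h₁ := not_exists.1 h 1
    have h₂ := not_exists.1 h 2
    have h₃ := not_exists.1 h 3
    omega

section Polygon

variable {L : List Pl}

theorem vtx_mod (L : List Pl) (m : ℕ) : vtx L (m % L.length) = vtx L m := by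
  simp [vtx]

theorem vtx_add_length (L : List Pl) (m : ℕ) : vtx L (m + L.length) = vtx L m := by
  simp [vtx]

theorem vtx_eq_getElem {m : ℕ} (hm : m < L.length) : vtx L m = L[m] := by
  rw [vtx, Nat.mod_eq_of_lt hm, List.getD_eq_getElem]

theorem vtx_mem_vertexSet (hL : L ≠ []) (m : ℕ) : vtx L m ∈ vertexSet L := by
  rw [← vtx_mod, vtx_eq_getElem (Nat.mod_lt _ (List.length_pos_iff.2 hL))]
  exact List.getElem_mem _

theorem mem_vertexSet_iff {y : Pl} : y ∈ vertexSet L ↔ ∃ k < L.length, vtx L k = y := by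
  simp only [vertexSet, mem_ofPred_eq, List.mem_iff_getElem]
  constructor
  · rintro ⟨k, hk, rfl⟩
    exact ⟨k, hk, vtx_eq_getElem hk⟩
  · rintro ⟨k, hk, rfl⟩
    exact ⟨k, hk, (vtx_eq_getElem hk).symm⟩

theorem mem_edg_iff {x : Pl} :
    x ∈ edg L ↔ ∃ i < L.length, x ∈ segment ℝ (vtx L i) (vtx L (i + 1)) := by
  simp [edg]

theorem vtx_mod_add_one (L : List Pl) (i : ℕ) : vtx L (i % L.length + 1) = vtx L (i + 1) := by
  rw [← vtx_mod L (i % L.length + 1), Nat.mod_add_mod, vtx_mod]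

theorem segment_subset_edg (hL : L ≠ []) (i : ℕ) :
    segment ℝ (vtx L i) (vtx L (i + 1)) ⊆ edg L := fun x hx => by
  refine mem_edg_iff.2 ⟨i % L.length, Nat.mod_lt _ (List.length_pos_iff.2 hL), ?_⟩
  rwa [vtx_mod, vtx_mod_add_one]

theorem vtx_mem_edg (hL : L ≠ []) (m : ℕ) : vtx L m ∈ edg L :=
  segment_subset_edg hL m (left_mem_segment ℝ _ _)

theorem vertexSet_eraseIdx_subset (α : ℕ) : vertexSet (L.eraseIdx α) ⊆ vertexSet L :=
  fun _ => List.mem_of_mem_eraseIdx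

theorem vtx_mem_vertexSet_eraseIdx {m α : ℕ} (hm : m < L.length) (hmα : m ≠ α) :
    vtx L m ∈ vertexSet (L.eraseIdx α) :=
  List.mem_eraseIdx_iff_getElem.2 ⟨m, hm, hmα, (vtx_eq_getElem hm).symm⟩

theorem vertexSet_subset_union_eraseIdx {α β : ℕ} (hαβ : α ≠ β) :
    vertexSet L ⊆ vertexSet (L.eraseIdx α) ∪ vertexSet (L.eraseIdx β) := fun y hy => by
  obtain ⟨k, hk, rfl⟩ := mem_vertexSet_iff.1 hy
  by_cases hkα : k = α
  · exact .inr (vtx_mem_vertexSet_eraseIdx hk (hkα ▸ hαβ))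
  · exact .inl (vtx_mem_vertexSet_eraseIdx hk hkα)

theorem vtx_eraseIdx_add {α j : ℕ} (hα : α < L.length) (hj : j + 1 < L.length) :
    vtx (L.eraseIdx α) (α + j) = vtx L (α + 1 + j) := by
  simp only [vtx, List.getD_eq_getElem?_getD, List.getElem?_eraseIdx,
    List.length_eraseIdx_of_lt hα]
  by_cases hwrap : α + j < L.length - 1
  · rw [Nat.mod_eq_of_lt hwrap, if_neg (by omega), Nat.mod_eq_of_lt (by omega)]
    rw [show α + j + 1 = α + 1 + j by omega]
  · rw [Nat.mod_eq_sub_mod (by omega), Nat.mod_eq_of_lt (by omega), if_pos (by omega),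
      Nat.mod_eq_sub_mod (by omega), Nat.mod_eq_of_lt (by omega)]
    rw [show α + j - (L.length - 1) = α + 1 + j - L.length by omega]

theorem edg_eraseIdx_subset {α : ℕ} (hα : α < L.length) :
    edg (L.eraseIdx α) ⊆ edg L ∪ segment ℝ (vtx L (α + L.length - 1)) (vtx L (α + 1)) := by
  intro x hx
  set L' := L.eraseIdx α
  have hlen : L'.length = L.length - 1 := List.length_eraseIdx_of_lt hα
  obtain ⟨i, hi, hxi⟩ := mem_edg_iff.1 hx
  obtain ⟨j, hj, hxj⟩ :
      ∃ j, j + 1 < L.length ∧ x ∈ segment ℝ (vtx L' (α + j)) (vtx L' (α + j + 1)) := by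
    by_cases hαi : α ≤ i
    · exact ⟨i - α, by omega, by rwa [Nat.add_sub_cancel' hαi]⟩
    · refine ⟨i + L'.length - α, by omega, ?_⟩
      rwa [show α + (i + L'.length - α) = i + L'.length by omega, vtx_add_length,
        show i + L'.length + 1 = i + 1 + L'.length by omega, vtx_add_length]
  rw [vtx_eraseIdx_add hα hj] at hxj
  by_cases hlast : j + 2 < L.length
  · rw [show α + j + 1 = α + (j + 1) from rfl, vtx_eraseIdx_add hα hlast] at hxj
    exact .inl (segment_subset_edg (List.ne_nil_of_length_pos (by omega)) _ hxj)
  · have hend : vtx L' (α + j + 1) = vtx L (α + 1) := by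
      rw [show α + j + 1 = α + 0 + L'.length by omega, vtx_add_length,
        vtx_eraseIdx_add hα (by omega), add_zero]
    rw [hend, show α + 1 + j = α + L.length - 1 by omega] at hxj
    exact .inr hxj

theorem segment_subset_edg_eraseIdx {α i : ℕ} (hα : α < L.length) (hi : i < L.length)
    (hαi : α ≠ i) (hαi' : α ≠ (i + 1) % L.length) :
    segment ℝ (vtx L i) (vtx L (i + 1)) ⊆ edg (L.eraseIdx α) := by
  have hαi'' : α ≠ i + 1 ∧ (i + 1 = L.length → α ≠ 0) := by
    rcases Nat.lt_or_ge (i + 1) L.length with h | h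
    · rw [Nat.mod_eq_of_lt h] at hαi'
      exact ⟨hαi', by omega⟩
    · rw [show i + 1 = L.length by omega, Nat.mod_self] at hαi'
      exact ⟨by omega, fun _ => hαi'⟩
  obtain ⟨j, hj, hji, hji'⟩ : ∃ j, j + 2 < L.length ∧
      vtx L (α + 1 + j) = vtx L i ∧ vtx L (α + 1 + j + 1) = vtx L (i + 1) := by
    by_cases hαi : α < i
    · refine ⟨i - α - 1, by omega, ?_⟩
      rw [show α + 1 + (i - α - 1) = i by omega]
      exact ⟨rfl, rfl⟩
    · refine ⟨i + L.length - α - 1, by omega, ?_, ?_⟩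
      · rw [show α + 1 + (i + L.length - α - 1) = i + L.length by omega, vtx_add_length]
      · rw [show α + 1 + (i + L.length - α - 1) + 1 = i + 1 + L.length by omega,
          vtx_add_length]
  rw [← hji, ← hji', ← vtx_eraseIdx_add hα (by omega), add_assoc,
    ← vtx_eraseIdx_add hα (by omega), ← add_assoc]
  exact segment_subset_edg
    (List.ne_nil_of_length_pos (by rw [List.length_eraseIdx_of_lt hα]; omega)) _

theorem isClosed_convexHull_vertexSet (L : List Pl) : IsClosed (convexHull ℝ (vertexSet L)) :=
  L.finite_toSet.isClosed_convexHull ℝ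

theorem isMaxOn_or_isMinOn_vertexSet_eraseIdx {α i : ℕ} (hα : α < L.length) (hi : i < L.length)
    (hαi : α ≠ i) (hαi' : α ≠ (i + 1) % L.length) (hconv : IsConvexPolygon (L.eraseIdx α))
    (hne : vtx L i ≠ vtx L (i + 1)) {r : Pl →ₗ[ℝ] ℝ} (hr : r ≠ 0)
    (hri : r (vtx L i) = r (vtx L (i + 1))) :
    IsMaxOn r (vertexSet (L.eraseIdx α)) (vtx L i) ∨
      IsMinOn r (vertexSet (L.eraseIdx α)) (vtx L i) := by
  have hmem : ∀ m < L.length, m ≠ α →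
      vtx L m ∈ convexHull ℝ (vertexSet (L.eraseIdx α)) :=
    fun m hm hmα => subset_convexHull ℝ _ (vtx_mem_vertexSet_eraseIdx hm hmα)
  have hsucc : vtx L (i + 1) ∈ convexHull ℝ (vertexSet (L.eraseIdx α)) := by
    rw [← vtx_mod]
    exact hmem _ (Nat.mod_lt _ (by omega)) (Ne.symm hαi')
  have hmid : midpoint ℝ (vtx L i) (vtx L (i + 1)) ∈
      frontier (convexHull ℝ (vertexSet (L.eraseIdx α))) := by
    rw [← hconv]
    exact segment_subset_edg_eraseIdx hα hi hαi hαi' (midpoint_mem_segment _ _)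
  exact (Convex.isMaxOn_or_isMinOn_of_midpoint_notMem_interior finrank_euclideanSpace_fin
    (convex_convexHull ℝ _) (hmem i hi hαi.symm) hsucc hne hmid.2 hr hri).imp
    (·.on_subset (subset_convexHull ℝ _)) (·.on_subset (subset_convexHull ℝ _))

theorem segment_subset_frontier_of_ne (hn : 5 ≤ L.length)
    (h : ∀ α < L.length, IsConvexPolygon (L.eraseIdx α)) {i : ℕ} (hi : i < L.length)
    (hne : vtx L i ≠ vtx L (i + 1)) :
    segment ℝ (vtx L i) (vtx L (i + 1)) ⊆ frontier (convexHull ℝ (vertexSet L)) := by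
  have hL : L ≠ [] := List.ne_nil_of_length_pos (by omega)
  obtain ⟨r, hr, hri⟩ := LinearMap.exists_ne_zero_apply_eq
    (by rw [finrank_euclideanSpace_fin]; norm_num) (vtx L i) (vtx L (i + 1))
  have hside : ∀ α ∈ ((Finset.range L.length).erase i).erase ((i + 1) % L.length),
      IsMaxOn r (vertexSet (L.eraseIdx α)) (vtx L i) ∨
        IsMinOn r (vertexSet (L.eraseIdx α)) (vtx L i) := fun α hα => by
    simp only [Finset.mem_erase, Finset.mem_range] at hα
    exact isMaxOn_or_isMinOn_vertexSet_eraseIdx hα.2.2 hi hα.2.1 hα.1 (h α hα.2.2) hne hr hri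
  obtain ⟨α, hα, β, hβ, γ, hγ, hαβ, hαγ, hβγ⟩ := (Finset.two_lt_card (s :=
    ((Finset.range L.length).erase i).erase ((i + 1) % L.length))).1 (by
      have h₁ := Finset.pred_card_le_card_erase (s := Finset.range L.length) (a := i)
      have h₂ := Finset.pred_card_le_card_erase (s := (Finset.range L.length).erase i)
        (a := (i + 1) % L.length)
      rw [Finset.card_range] at h₁
      omega)
  have hextr : IsExtrOn r (vertexSet L) (vtx L i) := by
    rcases hside α hα with h₁ | h₁ <;> rcases hside β hβ with h₂ | h₂
    · exact .inr ((h₁.union h₂).on_subset (vertexSet_subset_union_eraseIdx hαβ))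
    · rcases hside γ hγ with h₃ | h₃
      · exact .inr ((h₁.union h₃).on_subset (vertexSet_subset_union_eraseIdx hαγ))
      · exact .inl ((h₂.union h₃).on_subset (vertexSet_subset_union_eraseIdx hβγ))
    · rcases hside γ hγ with h₃ | h₃
      · exact .inr ((h₂.union h₃).on_subset (vertexSet_subset_union_eraseIdx hβγ))
      · exact .inl ((h₁.union h₃).on_subset (vertexSet_subset_union_eraseIdx hαγ))
    · exact .inl ((h₁.union h₂).on_subset (vertexSet_subset_union_eraseIdx hαβ))
  have hhull := r.isExtrOn_convexHull hextr
  intro x hx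
  rw [(isClosed_convexHull_vertexSet L).frontier_eq]
  refine ⟨(convex_convexHull ℝ _).segment_subset
    (subset_convexHull ℝ _ (vtx_mem_vertexSet hL i))
    (subset_convexHull ℝ _ (vtx_mem_vertexSet hL (i + 1))) hx,
    r.notMem_interior_of_isExtrOn hr ?_⟩
  have hrx := r.apply_eq_of_mem_segment hri hx
  exact hhull.imp (fun h => isMinOn_iff.2 fun y hy => hrx.trans_le (isMinOn_iff.1 h y hy))
    (fun h => isMaxOn_iff.2 fun y hy => (isMaxOn_iff.1 h y hy).trans_eq hrx.symm)

theorem exists_nondegenerate_edge_containing_vtx (hL : L ≠ []) {k m : ℕ}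
    (hkm : vtx L k ≠ vtx L m) :
    ∃ i < L.length, vtx L i ≠ vtx L (i + 1) ∧
      vtx L m ∈ segment ℝ (vtx L i) (vtx L (i + 1)) := by
  have hwalk : ∀ t, vtx L (m + t) = vtx L m ∨ ∃ i, vtx L i ≠ vtx L (i + 1) ∧
      vtx L m ∈ segment ℝ (vtx L i) (vtx L (i + 1)) := by
    intro t
    induction t with
    | zero => exact .inl rfl
    | succ t ih =>
      refine ih.elim (fun ht => ?_) .inr
      by_cases hstep : vtx L (m + t) = vtx L (m + t + 1)
      · exact .inl (hstep ▸ ht)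
      · exact .inr ⟨m + t, hstep, ht ▸ left_mem_segment ℝ _ _⟩
  have hk : vtx L (m + (k + L.length * m - m)) = vtx L k := by
    rw [show m + (k + L.length * m - m) = k + L.length * m by
      have := Nat.le_mul_of_pos_left m (List.length_pos_iff.2 hL); omega]
    simp [vtx]
  obtain ⟨i, hi, hmi⟩ := (hwalk _).resolve_left (hk ▸ hkm)
  refine ⟨i % L.length, Nat.mod_lt _ (List.length_pos_iff.2 hL), ?_⟩
  rw [vtx_mod, vtx_mod_add_one]
  exact ⟨hi, hmi⟩

theorem edg_subset_frontier (hn : 5 ≤ L.length)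
    (h : ∀ α < L.length, IsConvexPolygon (L.eraseIdx α)) :
    edg L ⊆ frontier (convexHull ℝ (vertexSet L)) := by
  have hL : L ≠ [] := List.ne_nil_of_length_pos (by omega)
  intro x hx
  obtain ⟨i, hi, hxi⟩ := mem_edg_iff.1 hx
  by_cases hdeg : vtx L i = vtx L (i + 1)
  swap
  · exact segment_subset_frontier_of_ne hn h hi hdeg hxi
  rw [hdeg, segment_same, mem_singleton_iff] at hxi
  subst hxi
  by_cases hconst : ∀ k, vtx L k = vtx L (i + 1)
  · have hV : vertexSet L = {vtx L (i + 1)} := by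
      ext y
      rw [mem_vertexSet_iff, mem_singleton_iff]
      exact ⟨fun ⟨k, _, hk⟩ => hk ▸ hconst k, fun hy => ⟨0, by omega, hy ▸ hconst 0⟩⟩
    rw [hV, convexHull_singleton, isClosed_singleton.frontier_eq, interior_singleton,
      sdiff_empty]
    rfl
  · obtain ⟨k, hk⟩ := not_forall.1 hconst
    obtain ⟨j, hj, hjne, hij⟩ := exists_nondegenerate_edge_containing_vtx hL hk
    exact segment_subset_frontier_of_ne hn h hj hjne hij

theorem apply_vtx_succ_eq_and_apply_vtx_ne {α : ℕ} (hα : α < L.length)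
    (hconv : IsConvexPolygon (L.eraseIdx α)) {p : Pl}
    (hpα : p ∈ convexHull ℝ (vertexSet (L.eraseIdx α)))
    (hp : p ∉ interior (convexHull ℝ (vertexSet L))) (hpL : p ∉ edg L) {f : Pl →ₗ[ℝ] ℝ}
    (hf : f ≠ 0) (hmax : IsMaxOn f (convexHull ℝ (vertexSet L)) p) :
    f (vtx L (α + 1)) = f p ∧ f (vtx L α) ≠ f p := by
  have hL' : L ≠ [] := List.ne_nil_of_length_pos (by omega)
  have hpα' : p ∈ edg (L.eraseIdx α) := by
    rw [hconv, (isClosed_convexHull_vertexSet _).frontier_eq]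
    exact ⟨hpα, fun h => hp (interior_mono (convexHull_mono (vertexSet_eraseIdx_subset α)) h)⟩
  have hbridge := (edg_eraseIdx_subset hα hpα').resolve_left hpL
  have hle : ∀ m, f (vtx L m) ≤ f p := fun m =>
    isMaxOn_iff.1 hmax _ (subset_convexHull ℝ _ (vtx_mem_vertexSet hL' m))
  have hne : ∀ m, vtx L m ≠ p := fun m h => hpL (h ▸ vtx_mem_edg hL' m)
  obtain ⟨hfU, hfW⟩ := f.apply_eq_of_mem_openSegment_of_le
    (mem_openSegment_of_ne_left_right (hne _) (hne _) hbridge) (hle _) (hle _)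
  refine ⟨hfW, fun hfV => hpL ?_⟩
  rcases segment_subset_union_of_apply_eq finrank_euclideanSpace_fin hf
    (hfU.trans hfV.symm) (hfW.trans hfV.symm) hbridge with h | h
  · have hsucc : vtx L (α + L.length - 1 + 1) = vtx L α := by
      rw [Nat.sub_add_cancel (by omega), vtx_add_length]
    exact segment_subset_edg hL' _ (hsucc ▸ h)
  · exact segment_subset_edg hL' α h

theorem frontier_subset_edg (hn : 5 ≤ L.length)
    (h : ∀ α < L.length, IsConvexPolygon (L.eraseIdx α)) :
    frontier (convexHull ℝ (vertexSet L)) ⊆ edg L := by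
  intro p hp
  by_contra hpL
  rw [(isClosed_convexHull_vertexSet L).frontier_eq] at hp
  obtain ⟨f, hf, hmax⟩ := (convex_convexHull ℝ _).exists_isMaxOn_of_notMem_interior hp.1 hp.2
  obtain ⟨x, hx, y, hy, hpxy⟩ :=
    exists_mem_segment_of_isMaxOn finrank_euclideanSpace_fin L.finite_toSet hf hp.1 hmax
  obtain ⟨a, ha, rfl⟩ := mem_vertexSet_iff.1 hx
  obtain ⟨b, hb, rfl⟩ := mem_vertexSet_iff.1 hy
  have hbridge : ∀ α < L.length, α ≠ a → α ≠ b →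
      f (vtx L (α + 1)) = f p ∧ f (vtx L α) ≠ f p := fun α hα hαa hαb =>
    apply_vtx_succ_eq_and_apply_vtx_ne hα (h α hα)
      ((convex_convexHull ℝ _).segment_subset
        (subset_convexHull ℝ _ (vtx_mem_vertexSet_eraseIdx ha (Ne.symm hαa)))
        (subset_convexHull ℝ _ (vtx_mem_vertexSet_eraseIdx hb (Ne.symm hαb))) hpxy)
      hp.2 hpL hf hmax
  obtain ⟨α, hα, hαa, hαb, hβa, hβb⟩ := exists_consecutive_pair_avoiding hn a b
  have hon := (hbridge α hα hαa hαb).1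
  have hoff := (hbridge _ (Nat.mod_lt _ (by omega)) hβa hβb).2
  rw [vtx_mod] at hoff
  exact hoff hon

end Polygon

/-- if `n ≥ 5` and all polygons obtained by removing one vertex are
convex, then the polygon is convex. -/
theorem stmt_1 (L : List Pl) (hn : 5 ≤ L.length)
    (h : ∀ α : ℕ, α < L.length → IsConvexPolygon (L.eraseIdx α)) :
    IsConvexPolygon L :=
  (edg_subset_frontier hn h).antisymm (frontier_subset_edg hn h)
end
end

section
/- Let P = (V_0, …, V_{n-1}) be a strictly convex n-gon in ℝ² and let σ be a permutation of {0, …, n-1}. Then the n-gon Pσ := (V_{σ(0)}, …, V_{σ(n-1)}) is strictly convex if and only if σ belongs to the dihedral subgroup G_n of the symmetric group on {0, …, n-1} generated by the cyclic permutation θ (θ(i) = i+1 mod n) and the reflection ρ (ρ(0) = 0 and ρ(i) = n-i for i ∈ {1, …, n-1}). -/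
open Set

noncomputable section

/-- The union of the edges of the `m`-gon `V` (indices in `Fin m`, cyclic). -/
def edgF {m : ℕ} (V : Fin (m + 1) → Pl) : Set Pl :=
  ⋃ i : Fin (m + 1), segment ℝ (V i) (V (i + 1))

/-- Convexity of a polygon given as a function on `Fin m`. -/
def IsConvexPolyF {m : ℕ} (V : Fin (m + 1) → Pl) : Prop :=
  edgF V = frontier (convexHull ℝ (Set.range V))

/-- Strictness: any three vertices with increasing indices are non-collinear. -/
def IsStrictF {m : ℕ} (V : Fin m → Pl) : Prop :=
  ∀ i j k : Fin m, i < j → j < k → ¬ Collinear ℝ ({V i, V j, V k} : Set Pl)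

/-! Elements of the dihedral group send edges to edges, so they preserve the edge set and the
vertex set, hence convexity; strictness is preserved by every permutation. Conversely, if `V ∘ σ`
is convex, its edges cover the same boundary as those of `V`, so every segment
`[V (σ i), V (σ (i + 1))]` lies in `edgF V`. Such a segment joins cyclically adjacent vertices:
otherwise the midpoint of `[V a, V b]` lies on an edge of `V`, and a supporting line there passes
through `V a`, `V b` and a third vertex, contradicting strictness. Hence `σ (i + 1) - σ i = ±1`;
the sign cannot change, since that would force `σ (i + 2) = σ i`, so `σ` is a rotation, or a
rotation composed with the reflection `i ↦ -i`. -/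

abbrev dihedralSubgroup (m : ℕ) : Subgroup (Equiv.Perm (Fin (m + 1))) :=
  Subgroup.closure {Equiv.addRight 1, Equiv.neg (Fin (m + 1))}

section Dihedral

variable {m : ℕ}

open Fin.NatCast

theorem addRight_mem_dihedralSubgroup (c : Fin (m + 1)) :
    Equiv.addRight c ∈ dihedralSubgroup m := by
  have h : Equiv.addRight c = Equiv.addRight (1 : Fin (m + 1)) ^ c.val := by
    simp [nsmul_one, Fin.cast_val_eq_self]
  rw [h]
  exact pow_mem (Subgroup.subset_closure (Set.mem_insert _ _)) _

theorem neg_mem_dihedralSubgroup : Equiv.neg (Fin (m + 1)) ∈ dihedralSubgroup m :=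
  Subgroup.subset_closure (Set.mem_insert_of_mem _ rfl)

theorem Fin.eq_add_nsmul_of_forall_add_one {G : Type*} [AddMonoid G] {f : Fin (m + 1) → G}
    {d : G} (h : ∀ i, f (i + 1) = f i + d) (i : Fin (m + 1)) : f i = f 0 + i.val • d := by
  suffices ∀ k : ℕ, f k = f 0 + k • d by simpa [Fin.cast_val_eq_self] using this i.val
  intro k
  induction k with
  | zero => simp
  | succ k ih => rw [Nat.cast_succ, h, ih, succ_nsmul, add_assoc]

theorem Fin.sub_add_one_eq_of_injective {f : Fin (m + 1) → Fin (m + 1)} (hf : f.Injective)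
    (h : ∀ i, f (i + 1) - f i = 1 ∨ f (i + 1) - f i = -1) (i : Fin (m + 1)) :
    f (i + 1 + 1) - f (i + 1) = f (i + 1) - f i := by
  by_contra hne
  -- a sign change gives `f (i + 2) = f i`, so `2 = 0` and then `-1 = 1`
  have htwo : (1 : Fin (m + 1)) + 1 = 0 := by
    have : f (i + 1 + 1) = f i := by
      rcases h i with h₁ | h₁ <;> rcases h (i + 1) with h₂ | h₂ <;> grind
    simpa [add_assoc] using congrArg (· - i) (hf this)
  have hneg : (-1 : Fin (m + 1)) = 1 := neg_eq_of_add_eq_zero_left htwo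
  rcases h i with h₁ | h₁ <;> rcases h (i + 1) with h₂ | h₂ <;> simp_all

theorem mem_dihedralSubgroup_of_forall_sub_eq_one_or_neg_one {σ : Equiv.Perm (Fin (m + 1))}
    (h : ∀ i, σ (i + 1) - σ i = 1 ∨ σ (i + 1) - σ i = -1) : σ ∈ dihedralSubgroup m := by
  have hconst : ∀ i, σ (i + 1) = σ i + (σ 1 - σ 0) := by
    suffices ∀ k : ℕ, σ (k + 1) - σ k = σ 1 - σ 0 by
      intro i
      simpa only [Fin.cast_val_eq_self, sub_eq_iff_eq_add'] using this i.val
    intro k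
    induction k with
    | zero => simp
    | succ k ih => rw [Nat.cast_succ, Fin.sub_add_one_eq_of_injective σ.injective h, ih]
  have hσ := Fin.eq_add_nsmul_of_forall_add_one hconst
  rcases h 0 with h₀ | h₀ <;> rw [zero_add] at h₀ <;> simp only [h₀] at hσ
  · have : σ = Equiv.addRight (σ 0) := by
      ext i; simp [hσ i, nsmul_one, Fin.cast_val_eq_self, add_comm]
    exact this ▸ addRight_mem_dihedralSubgroup _
  · have : σ = Equiv.addRight (σ 0) * Equiv.neg _ := by
      ext i; simp [hσ i, nsmul_one, Fin.cast_val_eq_self, add_comm]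
    exact this ▸ mul_mem (addRight_mem_dihedralSubgroup _) neg_mem_dihedralSubgroup

end Dihedral

section Invariance

variable {m : ℕ}

theorem edgF_comp_addRight_one (W : Fin (m + 1) → Pl) :
    edgF (W ∘ Equiv.addRight 1) = edgF W :=
  (Equiv.addRight 1).surjective.iUnion_comp fun i => segment ℝ (W i) (W (i + 1))

theorem edgF_comp_neg (W : Fin (m + 1) → Pl) : edgF (W ∘ Equiv.neg _) = edgF W := by
  rw [edgF, ← (Equiv.neg _ |>.trans (Equiv.addRight (-1))).surjective.iUnion_comp]
  refine Set.iUnion_congr fun i => ?_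
  simp only [Function.comp_apply, Equiv.neg_apply, Equiv.trans_apply, Equiv.coe_addRight]
  rw [segment_symm]
  congr 2 <;> abel

theorem edgF_comp_of_mem_dihedralSubgroup {σ : Equiv.Perm (Fin (m + 1))}
    (hσ : σ ∈ dihedralSubgroup m) (W : Fin (m + 1) → Pl) : edgF (W ∘ σ) = edgF W := by
  induction hσ using Subgroup.closure_induction generalizing W with
  | mem τ hτ =>
    rcases hτ with rfl | rfl
    exacts [edgF_comp_addRight_one W, edgF_comp_neg W]
  | one => rfl
  | mul τ υ _ _ ihτ ihυ => exact (ihυ (W ∘ τ)).trans (ihτ W)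
  | inv τ _ ih => simpa [Function.comp_assoc] using (ih (W ∘ ⇑τ⁻¹)).symm

end Invariance

theorem collinear_of_forall_apply_eq {E : Type*} [AddCommGroup E] [Module ℝ E]
    [FiniteDimensional ℝ E] (hE : Module.finrank ℝ E = 2) {f : Module.Dual ℝ E} (hf : f ≠ 0)
    {c : ℝ} {s : Set E} (hs : ∀ p ∈ s, f p = c) : Collinear ℝ s := by
  have hspan : vectorSpan ℝ s ≤ LinearMap.ker f := by
    rw [vectorSpan_def, Submodule.span_le]
    rintro _ ⟨p, hp, q, hq, rfl⟩
    simp [hs p hp, hs q hq]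
  have hker : Module.finrank ℝ (LinearMap.ker f) = 1 := by
    have := Module.Dual.finrank_ker_add_one_of_ne_zero hf
    omega
  rw [collinear_iff_finrank_le_one]
  exact hker ▸ Submodule.finrank_mono hspan

theorem affineSpan_eq_top_of_not_collinear {E : Type*} [AddCommGroup E] [Module ℝ E]
    [FiniteDimensional ℝ E] (hE : Module.finrank ℝ E = 2) {s : Set E} (h : ¬ Collinear ℝ s) :
    affineSpan ℝ s = ⊤ := by
  have hne : s.Nonempty := Set.nonempty_iff_ne_empty.2 fun hs => h (hs ▸ collinear_empty ℝ E)
  rw [AffineSubspace.affineSpan_eq_top_iff_vectorSpan_eq_top_of_nonempty ℝ E E hne]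
  apply Submodule.eq_top_of_finrank_eq
  have := Submodule.finrank_le (vectorSpan ℝ s)
  rw [collinear_iff_finrank_le_one] at h
  omega

theorem Convex.exists_forall_le_of_mem_frontier {E : Type*} [NormedAddCommGroup E]
    [NormedSpace ℝ E] {K : Set E} (hK : Convex ℝ K) (hint : (interior K).Nonempty) {x : E}
    (hx : x ∈ frontier K) : ∃ f : StrongDual ℝ E, f ≠ 0 ∧ ∀ y ∈ K, f y ≤ f x := by
  obtain ⟨f, hf⟩ := geometric_hahn_banach_open_point hK.interior isOpen_interior hx.2
  obtain ⟨y, hy⟩ := hint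
  refine ⟨f, fun h0 => by simpa [h0] using hf y hy, fun z hz => ?_⟩
  have hle : closure (interior K) ⊆ {z | f z ≤ f x} :=
    closure_minimal (fun z hz => (hf z hz).le) (isClosed_le f.continuous continuous_const)
  rw [hK.closure_interior_eq_closure_of_nonempty_interior ⟨y, hy⟩] at hle
  exact hle (subset_closure hz)

section Polygon

variable {m : ℕ}

theorem IsStrictF.not_collinear_of_ne {V : Fin m → Pl} (h : IsStrictF V) {a b c : Fin m}
    (hab : a ≠ b) (hac : a ≠ c) (hbc : b ≠ c) : ¬ Collinear ℝ ({V a, V b, V c} : Set Pl) := by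
  wlog hab' : a < b generalizing a b
  · rw [Set.insert_comm]
    exact this hab.symm hbc hac (lt_of_le_of_ne (not_lt.1 hab') hab.symm)
  wlog hbc' : b < c generalizing b c
  · rcases lt_or_gt_of_ne hac with hac' | hca
    · rw [Set.pair_comm]
      exact this hac hab hbc.symm hac' (lt_of_le_of_ne (not_lt.1 hbc') hbc.symm)
    · rw [Set.pair_comm, Set.insert_comm]
      exact h c a b hca hab'
  exact h a b c hab' hbc'

theorem IsStrictF.comp_perm {V : Fin m → Pl} (h : IsStrictF V) (σ : Equiv.Perm (Fin m)) :
    IsStrictF (V ∘ σ) := fun _ _ _ hij hjk =>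
  h.not_collinear_of_ne (σ.injective.ne hij.ne) (σ.injective.ne (hij.trans hjk).ne)
    (σ.injective.ne hjk.ne)

theorem IsStrictF.injective {V : Fin m → Pl} (h : IsStrictF V) (hm : 3 ≤ m) : V.Injective := by
  intro a b hV
  by_contra hab
  obtain ⟨c, hc⟩ : ({a, b}ᶜ : Finset (Fin m)).Nonempty := by
    rw [← Finset.card_pos, Finset.card_compl, Fintype.card_fin]
    have := Finset.card_le_two (a := a) (b := b)
    omega
  simp only [Finset.mem_compl, Finset.mem_insert, Finset.mem_singleton, not_or] at hc
  refine h.not_collinear_of_ne hab (Ne.symm hc.1) (Ne.symm hc.2) ?_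
  rw [hV, Set.insert_eq_of_mem (Set.mem_insert _ _)]
  exact collinear_pair ℝ _ _

theorem IsStrictF.affineSpan_range_eq_top {V : Fin m → Pl} (h : IsStrictF V) (hm : 3 ≤ m) :
    affineSpan ℝ (Set.range V) = ⊤ :=
  affineSpan_eq_top_of_not_collinear finrank_euclideanSpace_fin fun hc =>
    h ⟨0, by omega⟩ ⟨1, by omega⟩ ⟨2, by omega⟩ (by simp [Fin.lt_def]) (by simp [Fin.lt_def])
      (hc.subset (Set.insert_subset_iff.2 ⟨Set.mem_range_self _,
        Set.insert_subset_iff.2 ⟨Set.mem_range_self _,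
          Set.singleton_subset_iff.2 (Set.mem_range_self _)⟩⟩))

theorem IsStrictF.eq_or_eq_of_apply_eq {V : Fin m → Pl} (h : IsStrictF V) {f : Module.Dual ℝ Pl}
    (hf : f ≠ 0) {c : ℝ} {a b t : Fin m} (hab : a ≠ b) (ha : f (V a) = c) (hb : f (V b) = c)
    (ht : f (V t) = c) : t = a ∨ t = b := by
  by_contra! hne
  refine h.not_collinear_of_ne hab hne.1.symm hne.2.symm
    (collinear_of_forall_apply_eq finrank_euclideanSpace_fin hf (c := c) ?_)
  rintro x (rfl | rfl | rfl) <;> assumption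

theorem Fin.sub_eq_one_or_neg_one_of_ne (hm : m ≤ 1) {a b : Fin (m + 1)} (hab : a ≠ b) :
    b - a = 1 ∨ b - a = -1 := by
  interval_cases m <;> revert a b <;> decide

theorem IsConvexPolyF.sub_eq_one_or_neg_one_of_segment_subset_edgF {V : Fin (m + 1) → Pl}
    (hconv : IsConvexPolyF V) (hstrict : IsStrictF V) {a b : Fin (m + 1)} (hab : a ≠ b)
    (hsub : segment ℝ (V a) (V b) ⊆ edgF V) : b - a = 1 ∨ b - a = -1 := by
  by_contra hadj
  have hm : 2 ≤ m := by
    by_contra hm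
    exact hadj (Fin.sub_eq_one_or_neg_one_of_ne (by omega) hab)
  set K := convexHull ℝ (Set.range V)
  set M := midpoint ℝ (V a) (V b)
  have hvK : ∀ i, V i ∈ K := fun i => subset_convexHull ℝ _ (Set.mem_range_self i)
  have hMedg : M ∈ edgF V := hsub (midpoint_mem_segment _ _)
  -- `M` lies on the boundary of `K`, so a supporting line at `M` exposes a face `F` of `K`
  -- which contains `V a`, `V b` and, being extreme, the vertices of an edge through `M`.
  obtain ⟨f, hf0, hf⟩ := (convex_convexHull ℝ _).exists_forall_le_of_mem_frontier
    (interior_convexHull_nonempty_iff_affineSpan_eq_top.2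
      (hstrict.affineSpan_range_eq_top (by omega))) (hconv ▸ hMedg)
  set F := f.toExposed K
  have hF : IsExtreme ℝ K F := ContinuousLinearMap.toExposed.isExposed.isExtreme
  have hMF : M ∈ F :=
    ⟨(convex_convexHull ℝ _).segment_subset (hvK a) (hvK b) (midpoint_mem_segment _ _), hf⟩
  have hMo : M ∈ openSegment ℝ (V a) (V b) := midpoint_mem_openSegment _ _
  have hlevel : ∀ x ∈ F, f x = f M := fun x hx => le_antisymm (hf x hx.1) (hx.2 M hMF.1)
  have hthird : ∀ t, t ≠ a → t ≠ b → V t ∉ F := fun t hta htb htF =>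
    (hstrict.eq_or_eq_of_apply_eq (f := (f : Pl →ₗ[ℝ] ℝ))
      (by simpa using ContinuousLinearMap.coe_injective.ne hf0) hab
      (hlevel _ (hF.left_mem_of_mem_openSegment (hvK a) (hvK b) hMF hMo))
      (hlevel _ (hF.right_mem_of_mem_openSegment (hvK a) (hvK b) hMF hMo))
      (hlevel _ htF)).elim hta htb
  have hVab : V a ≠ V b := (hstrict.injective (by omega)).ne hab
  have hvertex : ∀ j, M = V j → V j ∉ F := fun j hj =>
    hthird j (by rintro rfl; exact hVab ((midpoint_eq_left_iff ℝ).1 hj))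
      (by rintro rfl; exact hVab ((midpoint_eq_right_iff ℝ).1 hj))
  obtain ⟨i, hi⟩ := Set.mem_iUnion.1 hMedg
  rw [← insert_endpoints_openSegment] at hi
  rcases hi with hi | hi | hi
  · exact hvertex i hi (hi ▸ hMF)
  · exact hvertex (i + 1) hi (hi ▸ hMF)
  have hone : (1 : Fin (m + 1)) ≠ 0 := by rw [Ne, Fin.one_eq_zero_iff]; omega
  by_cases hi' : i ≠ a ∧ i ≠ b
  · exact hthird i hi'.1 hi'.2 (hF.left_mem_of_mem_openSegment (hvK _) (hvK _) hMF hi)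
  · exact hthird (i + 1) (by grind) (by grind)
      (hF.right_mem_of_mem_openSegment (hvK _) (hvK _) hMF hi)

end Polygon

/-- for a strictly convex `n`-gon `V` and a permutation `σ` of the
index set, the permuted polygon `V ∘ σ` is strictly convex iff `σ` lies in the
dihedral subgroup generated by the cyclic shift `i ↦ i + 1` and the reflection
`i ↦ -i`. -/
theorem stmt_4 (n : ℕ) (V : Fin (n + 1) → Pl)
    (hstrict : IsStrictF V) (hconv : IsConvexPolyF V)
    (σ : Equiv.Perm (Fin (n + 1))) :
    (IsStrictF (V ∘ σ) ∧ IsConvexPolyF (V ∘ σ)) ↔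
      σ ∈ Subgroup.closure
        ({Equiv.addRight (1 : Fin (n + 1)), Equiv.neg (Fin (n + 1))} :
          Set (Equiv.Perm (Fin (n + 1)))) := by
  constructor
  · rintro ⟨-, hconvσ⟩
    obtain rfl | hn := Nat.eq_zero_or_pos n
    · exact (show σ = 1 from Equiv.ext fun _ => Subsingleton.elim (α := Fin 1) _ _) ▸ one_mem _
    have hedg : edgF (V ∘ σ) = edgF V := by
      unfold IsConvexPolyF at hconvσ hconv
      rw [hconvσ, σ.surjective.range_comp, hconv]
    refine mem_dihedralSubgroup_of_forall_sub_eq_one_or_neg_one fun i =>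
      hconv.sub_eq_one_or_neg_one_of_segment_subset_edgF hstrict ?_ ?_
    · exact σ.injective.ne (by rw [Ne, left_eq_add, Fin.one_eq_zero_iff]; omega)
    · exact hedg ▸ Set.subset_iUnion (fun j => segment ℝ (V (σ j)) (V (σ (j + 1)))) i
  · intro hσ
    refine ⟨hstrict.comp_perm σ, ?_⟩
    rw [IsConvexPolyF, edgF_comp_of_mem_dihedralSubgroup hσ, σ.surjective.range_comp, hconv]
end
end

section
/- A polygon P = (V_0, …, V_{n-1}) in ℝ² is quasi-convex if and only if it is to-one-side, i.e., for every i ∈ {0, …, n-1}, the vertices V_0, …, V_{n-1} lie to one side of the edge [V_i, V_{i+1}]. -/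
open Set

noncomputable section

-- helpers
def lf (a b : ℝ) : Pl →ₗ[ℝ] ℝ where
  toFun x := a * x 0 + b * x 1
  map_add' x y := by simp [PiLp.add_apply]; ring
  map_smul' r x := by simp [PiLp.smul_apply, smul_eq_mul]; ring

lemma lf_ne (a b : ℝ) (h : ¬(a = 0 ∧ b = 0)) : lf a b ≠ 0 := by
  intro h0
  apply h
  constructor
  · have := DFunLike.congr_fun h0 (EuclideanSpace.single 0 1)
    simpa [lf, EuclideanSpace.single_apply] using this
  · have := DFunLike.congr_fun h0 (EuclideanSpace.single 1 1)
    simpa [lf, EuclideanSpace.single_apply] using this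

lemma span_top_of_not_collinear {s : Set Pl} (h : ¬ Collinear ℝ s) : affineSpan ℝ s = ⊤ := by
  have hne : s.Nonempty := by
    rw [Set.nonempty_iff_ne_empty]; rintro rfl; exact h (collinear_empty ℝ _)
  rw [AffineSubspace.affineSpan_eq_top_iff_vectorSpan_eq_top_of_nonempty ℝ Pl Pl hne]
  have h1 : ¬ Module.finrank ℝ (vectorSpan ℝ s) ≤ 1 := fun hle =>
    h ((collinear_iff_finrank_le_one).mpr hle)
  have h2 : Module.finrank ℝ (vectorSpan ℝ s) ≤ 2 := by
    have := Submodule.finrank_le (vectorSpan ℝ s)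
    simpa [finrank_euclideanSpace_fin] using this
  apply Submodule.eq_top_of_finrank_eq
  simp only [finrank_euclideanSpace_fin]; omega

lemma vtx_mem {L : List Pl} (hL : L ≠ []) (j : ℕ) : vtx L j ∈ vertexSet L := by
  have hlen : 0 < L.length := List.length_pos_iff.mpr hL
  have h : j % L.length < L.length := Nat.mod_lt _ hlen
  rw [vtx, List.getD_eq_getElem _ _ h]
  exact List.getElem_mem h

lemma support_at_frontier {K : Set Pl} (hK : Convex ℝ K)
    (hint : (interior K).Nonempty) {M : Pl} (hM : M ∉ interior K) :
    ∃ f : Pl →ₗ[ℝ] ℝ, f ≠ 0 ∧ ∀ x ∈ K, f x ≤ f M := by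
  obtain ⟨f, hf⟩ := geometric_hahn_banach_open_point hK.interior isOpen_interior hM
  obtain ⟨y, hy⟩ := hint
  have hylt : f y < f M := hf y hy
  refine ⟨f.toLinearMap, ?_, ?_⟩
  · intro h0
    have h1 : f y = 0 := by
      have := DFunLike.congr_fun h0 y
      simpa using this
    have h2 : f M = 0 := by
      have := DFunLike.congr_fun h0 M
      simpa using this
    rw [h1, h2] at hylt; exact lt_irrefl _ hylt
  · intro x hx
    simp only [ContinuousLinearMap.coe_coe]
    by_contra hlt
    push_neg at hlt
    have hd : 0 < f x - f y := by linarith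
    set t := min (1/2 : ℝ) ((f x - f M) / (2 * (f x - f y))) with ht_def
    have ht0 : 0 < t := lt_min (by norm_num) (div_pos (by linarith) (by linarith))
    have ht1 : t ≤ 1/2 := min_le_left _ _
    have hmem : (1 - t) • x + t • y ∈ interior K :=
      hK.combo_self_interior_mem_interior hx hy (by linarith) ht0 (by ring)
    have hlt2 := hf _ hmem
    rw [map_add, map_smul, map_smul, smul_eq_mul, smul_eq_mul] at hlt2
    have htd : t * (f x - f y) ≤ (f x - f M) / 2 := by
      have h3 := mul_le_mul_of_nonneg_right
        (min_le_right (1/2 : ℝ) ((f x - f M) / (2 * (f x - f y)))) hd.le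
      have h4 : (f x - f M) / (2 * (f x - f y)) * (f x - f y) = (f x - f M) / 2 := by
        field_simp
      rw [h4] at h3; exact h3
    have hexp : (1 - t) * f x + t * f y = f x - t * (f x - f y) := by ring
    rw [hexp] at hlt2
    linarith

/-- a polygon is quasi-convex iff it is to-one-side. -/
theorem stmt_5 (L : List Pl) :
    IsQuasiConvex L ↔
      ∀ i : ℕ, i < L.length → OneSide (vtx L i) (vtx L (i + 1)) (vertexSet L) := by
  constructor
  · intro hQC i hi
    have hL : L ≠ [] := by intro h; rw [h] at hi; simp at hi
    set s := vertexSet L with hs_def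
    by_cases hcol : Collinear ℝ s
    · -- collinear case
      have hp₀ : vtx L 0 ∈ s := vtx_mem hL 0
      rw [collinear_iff_of_mem hp₀] at hcol
      obtain ⟨v, hv⟩ := hcol
      by_cases hv0 : v = 0
      · refine ⟨lf 1 0, lf 1 0 (vtx L 0), lf_ne 1 0 (by norm_num), ?_, ?_, ?_⟩
        · obtain ⟨t, ht⟩ := hv (vtx L i) (vtx_mem hL i)
          rw [ht, hv0]; simp
        · obtain ⟨t, ht⟩ := hv (vtx L (i+1)) (vtx_mem hL (i+1))
          rw [ht, hv0]; simp
        · intro p hp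
          obtain ⟨t, ht⟩ := hv p hp
          rw [ht, hv0]; simp
      · have hvne : ¬(v 1 = 0 ∧ -(v 0) = 0) := by
          rintro ⟨h1, h0⟩
          apply hv0
          ext j
          fin_cases j
          · simpa using (neg_eq_zero.mp h0)
          · simpa using h1
        have hfv : lf (v 1) (-(v 0)) v = 0 := by
          show v 1 * v 0 + -(v 0) * v 1 = 0
          ring
        have key : ∀ p ∈ s, lf (v 1) (-(v 0)) p = lf (v 1) (-(v 0)) (vtx L 0) := by
          intro p hp
          obtain ⟨t, ht⟩ := hv p hp
          rw [ht]
          rw [vadd_eq_add, map_add, map_smul, hfv, smul_eq_mul, mul_zero, zero_add]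
        exact ⟨lf (v 1) (-(v 0)), lf (v 1) (-(v 0)) (vtx L 0), lf_ne _ _ hvne,
          key _ (vtx_mem hL i), key _ (vtx_mem hL (i+1)),
          fun p hp => le_of_eq (key p hp)⟩
    · -- non-collinear case
      set K := convexHull ℝ s with hK_def
      have hKconv : Convex ℝ K := convex_convexHull ℝ s
      have hspan : affineSpan ℝ K = ⊤ := by
        rw [hK_def, affineSpan_convexHull]
        exact span_top_of_not_collinear hcol
      have hint : (interior K).Nonempty :=
        hKconv.interior_nonempty_iff_affineSpan_eq_top.mpr hspan
      set A := vtx L i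
      set B := vtx L (i+1)
      set M := midpoint ℝ A B with hM_def
      have hMseg : M ∈ segment ℝ A B := midpoint_mem_segment A B
      have hMedg : M ∈ edg L := Set.mem_biUnion (Finset.mem_range.mpr hi) hMseg
      have hMfr : M ∈ frontier K := hQC hMedg
      have hMnotint : M ∉ interior K := hMfr.2
      have hA : A ∈ K := subset_convexHull ℝ s (vtx_mem hL i)
      have hB : B ∈ K := subset_convexHull ℝ s (vtx_mem hL (i+1))
      obtain ⟨f, hf0, hfle⟩ := support_at_frontier hKconv hint hMnotint
      have hfM : f M = (f A + f B) / 2 := by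
        rw [hM_def, midpoint_eq_smul_add, map_smul, map_add, smul_eq_mul]
        rw [invOf_eq_inv]
        ring
      have hAle : f A ≤ f M := hfle A hA
      have hBle : f B ≤ f M := hfle B hB
      refine ⟨f, f M, hf0, by linarith, by linarith,
        fun p hp => hfle p (subset_convexHull ℝ s hp)⟩
  · intro hOS x hx
    simp only [edg, Set.mem_iUnion, Finset.mem_range, exists_prop] at hx
    obtain ⟨i, hi, hxseg⟩ := hx
    have hL : L ≠ [] := by intro h; rw [h] at hi; simp at hi
    obtain ⟨f, c, hf0, hfA, hfB, hfle⟩ := hOS i hi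
    set s := vertexSet L
    set K := convexHull ℝ s with hK_def
    have hA : vtx L i ∈ K := subset_convexHull ℝ s (vtx_mem hL i)
    have hB : vtx L (i+1) ∈ K := subset_convexHull ℝ s (vtx_mem hL (i+1))
    have hxK : x ∈ K := (convex_convexHull ℝ s).segment_subset hA hB hxseg
    have hKle : ∀ y ∈ K, f y ≤ c := by
      intro y hy
      have : K ⊆ {w | f w ≤ c} :=
        convexHull_min hfle (convex_halfSpace_le f.isLinear c)
      exact this hy
    have hfx : f x = c := by
      obtain ⟨a, b, ha, hb, hab, hx_eq⟩ := hxseg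
      rw [← hx_eq, map_add, map_smul, map_smul, smul_eq_mul, smul_eq_mul, hfA, hfB, ← add_mul, hab, one_mul]
    constructor
    · exact subset_closure hxK
    · intro hxint
      obtain ⟨u, hu⟩ : ∃ u, f u ≠ 0 := by
        by_contra h
        push_neg at h
        exact hf0 (LinearMap.ext fun z => by simpa using h z)
      set w := (f u)⁻¹ • u with hw_def
      have hfw : f w = 1 := by
        rw [hw_def, map_smul, smul_eq_mul, inv_mul_cancel₀ hu]
      obtain ⟨ε, hε, hball⟩ := Metric.isOpen_iff.mp isOpen_interior x hxint
      set δ := ε / (2 * (‖w‖ + 1)) with hδ_def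
      have hδ0 : 0 < δ := by positivity
      have hnorm : ‖w‖ + 1 > 0 := by positivity
      set y := x + δ • w with hy_def
      have hyball : y ∈ Metric.ball x ε := by
        rw [hy_def, Metric.mem_ball, dist_eq_norm]
        simp only [add_sub_cancel_left]
        rw [norm_smul, Real.norm_eq_abs, abs_of_pos hδ0]
        have h1 : δ * ‖w‖ < δ * (‖w‖ + 1) := by nlinarith
        have h2 : δ * (‖w‖ + 1) = ε / 2 := by
          rw [hδ_def]; field_simp
        linarith
      have hyK : y ∈ K := interior_subset (hball hyball)
      have : f y = c + δ := by
        rw [hy_def, map_add, map_smul, smul_eq_mul, hfw, hfx, mul_one]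
      have := hKle y hyK
      linarith
end
end

section
/- Let P = (V_0, …, V_{n-1}) be a quasi-convex polygon in ℝ² and let ℓ be a line supporting to conv P. Then ℓ ∩ conv P = [V_i, V_k] for some i, k ∈ {0, …, n-1}, and moreover V_i and V_k are extreme points of conv P. -/
/-!
On a supporting line `ℓ = {f = c}` the hull `K = conv P` meets `ℓ` in a face `F` of `K`.
In the plane `f` has a one-dimensional kernel, so some linear `g` is injective on `ℓ`; the
minimiser `A` and maximiser `B` of `g` on the compact convex set `F` then satisfy `F = [A, B]`,
and as unique extremisers of `g` on a face they are extreme points of `K`, hence vertices.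
-/

open Set

noncomputable section

open Module

section Faces

variable {𝕜 E : Type*} [Field 𝕜] [LinearOrder 𝕜] [IsStrictOrderedRing 𝕜] [AddCommGroup E]
  [Module 𝕜 E]

theorem isExtreme_setOf_eq_inter_of_forall_le {K : Set E} (g : E →ₗ[𝕜] 𝕜) {c : 𝕜}
    (hK : ∀ x ∈ K, g x ≤ c) : IsExtreme 𝕜 K ({x | g x = c} ∩ K) := by
  refine ⟨inter_subset_right, fun x₁ hx₁ x₂ hx₂ x ⟨hx, _⟩ ⟨a, b, ha, hb, hab, hxab⟩ => ⟨?_, hx₁⟩⟩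
  have hsum : a * g x₁ + b * g x₂ = c := by
    rw [← hx.out, ← hxab, map_add, map_smul, map_smul, smul_eq_mul, smul_eq_mul]
  refine le_antisymm (hK x₁ hx₁) (le_of_not_gt fun hlt => ?_)
  have hc : (a + b) * c = c := by rw [hab, one_mul]
  nlinarith [mul_le_mul_of_nonneg_left (hK x₂ hx₂) hb.le, mul_lt_mul_of_pos_left hlt ha]

theorem mem_extremePoints_of_isMaxOn_of_injOn {F : Set E} {g : E →ₗ[𝕜] 𝕜} {A : E}
    (hinj : InjOn g F) (hA : A ∈ F) (hmax : IsMaxOn g F A) : A ∈ F.extremePoints 𝕜 := by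
  have hface : {x | g x = g A} ∩ F = {A} :=
    eq_singleton_iff_unique_mem.2 ⟨⟨rfl, hA⟩, fun x hx => hinj hx.2 hA hx.1⟩
  rw [← isExtreme_singleton, ← hface]
  exact isExtreme_setOf_eq_inter_of_forall_le g fun x hx => hmax hx

theorem mem_extremePoints_of_isMinOn_of_injOn {F : Set E} {g : E →ₗ[𝕜] 𝕜} {A : E}
    (hinj : InjOn g F) (hA : A ∈ F) (hmin : IsMinOn g F A) : A ∈ F.extremePoints 𝕜 :=
  mem_extremePoints_of_isMaxOn_of_injOn (g := -g)
    (fun _ hx _ hy h => hinj hx hy (neg_inj.1 h)) hA hmin.neg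

theorem Convex.eq_segment_of_injOn {F : Set E} (hF : Convex 𝕜 F) {g : E →ₗ[𝕜] 𝕜} {A B : E}
    (hinj : InjOn g F) (hA : A ∈ F) (hB : B ∈ F) (hmin : IsMinOn g F A)
    (hmax : IsMaxOn g F B) : F = segment 𝕜 A B := by
  refine Subset.antisymm (fun x hx => ?_) (hF.segment_subset hA hB)
  have hgx : g x ∈ g.toAffineMap '' segment 𝕜 A B := by
    rw [image_segment, LinearMap.coe_toAffineMap, segment_eq_Icc (hmin hB)]
    exact ⟨hmin hx, hmax hx⟩
  obtain ⟨y, hy, hyx⟩ := hgx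
  rwa [← hinj (hF.segment_subset hA hB hy) hx hyx]

end Faces

theorem Module.Dual.exists_injOn_preimage_singleton {K E : Type*} [Field K] [AddCommGroup E]
    [Module K E] [FiniteDimensional K E] (hE : finrank K E = 2) {f : Dual K E} (hf : f ≠ 0) :
    ∃ g : Dual K E, ∀ c, InjOn g (f ⁻¹' {c}) := by
  have hker : finrank K (LinearMap.ker f) = 1 := by
    have := finrank_ker_add_one_of_ne_zero hf
    omega
  obtain ⟨w, hw⟩ := finrank_pos_iff_exists_ne_zero.1 (hker ▸ Nat.one_pos)
  obtain ⟨g, hg⟩ := Projective.exists_dual_ne_zero K (Subtype.coe_ne_coe.2 hw)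
  refine ⟨g, fun c x hx y hy hxy => ?_⟩
  have hxy_ker : x - y ∈ LinearMap.ker f := by
    rw [LinearMap.mem_ker, map_sub, sub_eq_zero]
    exact hx.trans hy.symm
  obtain ⟨s, hs⟩ := (finrank_eq_one_iff_of_nonzero' w hw).1 hker ⟨x - y, hxy_ker⟩
  have hs' : s • (w : E) = x - y := congrArg Subtype.val hs
  have hs0 : s * g w = 0 := by
    rw [← smul_eq_mul, ← map_smul, hs', map_sub, hxy, sub_self]
  rw [← sub_eq_zero, ← hs', (mul_eq_zero.1 hs0).resolve_right hg, zero_smul]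

theorem exists_vtx_eq_of_mem_vertexSet {L : List Pl} {x : Pl} (hx : x ∈ vertexSet L) :
    ∃ i < L.length, vtx L i = x := by
  obtain ⟨i, hi, rfl⟩ := List.getElem_of_mem hx
  exact ⟨i, hi, by rw [vtx, Nat.mod_eq_of_lt hi, List.getD_eq_getElem]⟩

theorem stmt_15_general (L : List Pl) (ℓ : Set Pl)
    (hsupp : IsSuppLine ℓ (convexHull ℝ (vertexSet L))) :
    ∃ i k : ℕ, i < L.length ∧ k < L.length ∧
      ℓ ∩ convexHull ℝ (vertexSet L) = segment ℝ (vtx L i) (vtx L k) ∧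
      vtx L i ∈ Set.extremePoints ℝ (convexHull ℝ (vertexSet L)) ∧
      vtx L k ∈ Set.extremePoints ℝ (convexHull ℝ (vertexSet L)) := by
  obtain ⟨hne, f, c, hf, rfl, hle⟩ := hsupp
  set K := convexHull ℝ (vertexSet L)
  obtain ⟨g, hg⟩ := Dual.exists_injOn_preimage_singleton (finrank_euclideanSpace_fin (𝕜 := ℝ)) hf
  have hinj : InjOn g ({x | f x = c} ∩ K) := (hg c).mono inter_subset_left
  have hcompact : IsCompact ({x | f x = c} ∩ K) :=
    (L.finite_toSet.isCompact_convexHull (𝕜 := ℝ)).inter_left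
      (isClosed_eq f.continuous_of_finiteDimensional continuous_const)
  have hconvex : Convex ℝ ({x | f x = c} ∩ K) :=
    (convex_hyperplane f.isLinear c).inter (convex_convexHull ℝ _)
  have hface := isExtreme_setOf_eq_inter_of_forall_le f hle
  have hgcont := g.continuous_of_finiteDimensional
  obtain ⟨A, hA, hAmin⟩ := hcompact.exists_isMinOn hne hgcont.continuousOn
  obtain ⟨B, hB, hBmax⟩ := hcompact.exists_isMaxOn hne hgcont.continuousOn
  have hAext := hface.extremePoints_subset_extremePoints
    (mem_extremePoints_of_isMinOn_of_injOn hinj hA hAmin)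
  have hBext := hface.extremePoints_subset_extremePoints
    (mem_extremePoints_of_isMaxOn_of_injOn hinj hB hBmax)
  obtain ⟨i, hi, rfl⟩ := exists_vtx_eq_of_mem_vertexSet (extremePoints_convexHull_subset hAext)
  obtain ⟨k, hk, rfl⟩ := exists_vtx_eq_of_mem_vertexSet (extremePoints_convexHull_subset hBext)
  exact ⟨i, k, hi, hk, hconvex.eq_segment_of_injOn hinj hA hB hAmin hBmax, hAext, hBext⟩

/-- a line supporting to the convex hull of a quasi-convex polygon
meets the hull exactly in a segment `[V_i, V_k]` joining two vertices which are
extreme points of the hull. -/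
theorem stmt_15 (L : List Pl) (hqc : IsQuasiConvex L) (ℓ : Set Pl)
    (hsupp : IsSuppLine ℓ (convexHull ℝ (vertexSet L))) :
    ∃ i k : ℕ, i < L.length ∧ k < L.length ∧
      ℓ ∩ convexHull ℝ (vertexSet L) = segment ℝ (vtx L i) (vtx L k) ∧
      vtx L i ∈ Set.extremePoints ℝ (convexHull ℝ (vertexSet L)) ∧
      vtx L k ∈ Set.extremePoints ℝ (convexHull ℝ (vertexSet L)) :=
  stmt_15_general L ℓ hsupp
end
end

section
/- Suppose that: (i) the polygon P = (V_0, …, V_{n-1}) in ℝ² is quasi-convex; (ii) ℓ is a line supporting to conv P; (iii) j ∈ {1, …, n}; (iv) V_{j-1} ∈ ℓ; and (v) V_j ∉ ℓ (with the convention V_n := V_0). Then V_{j-1} is an extreme point of conv P. -/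
open Set

noncomputable section

/-- if a quasi-convex polygon has `V_{j-1}` on a supporting line `ℓ`
and `V_j ∉ ℓ` (indices cyclic, `1 ≤ j ≤ n`), then `V_{j-1}` is an extreme point of
the convex hull. -/
theorem stmt_16 (L : List Pl) (hqc : IsQuasiConvex L) (ℓ : Set Pl)
    (hsupp : IsSuppLine ℓ (convexHull ℝ (vertexSet L)))
    (j : ℕ) (hj1 : 1 ≤ j) (hjn : j ≤ L.length)
    (hin : vtx L (j - 1) ∈ ℓ) (hout : vtx L j ∉ ℓ) :
    vtx L (j - 1) ∈ Set.extremePoints ℝ (convexHull ℝ (vertexSet L)) := by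
  obtain ⟨-, f, c, hf0, hl, hle⟩ := hsupp
  set K := convexHull ℝ (vertexSet L) with hK
  have hn : 0 < L.length := lt_of_lt_of_le hj1 hjn
  have hmem : ∀ k, vtx L k ∈ vertexSet L := by
    intro k
    have hk : k % L.length < L.length := Nat.mod_lt _ hn
    show L.getD (k % L.length) 0 ∈ L
    rw [List.getD_eq_getElem L 0 hk]
    exact List.getElem_mem hk
  set V := vtx L (j - 1) with hV
  set W := vtx L j with hW
  have hVK : V ∈ K := subset_convexHull ℝ _ (hmem _)
  have hWK : W ∈ K := subset_convexHull ℝ _ (hmem _)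
  have hfV : f V = c := by rw [hl] at hin; exact hin
  have hfW : f W < c := lt_of_le_of_ne (hle _ hWK) (by rw [hl] at hout; exact hout)
  have hedge : segment ℝ V W ⊆ frontier K := by
    refine Set.Subset.trans ?_ hqc
    have hj' : j - 1 + 1 = j := Nat.succ_pred_eq_of_pos hj1
    have : segment ℝ (vtx L (j-1)) (vtx L ((j-1) + 1)) ⊆ edg L :=
      Set.subset_biUnion_of_mem (u := fun i => segment ℝ (vtx L i) (vtx L (i+1)))
        (Finset.mem_range.mpr (show j - 1 < L.length by omega))
    rwa [hj'] at this
  rw [mem_extremePoints]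
  refine ⟨hVK, fun x₁ h₁ x₂ h₂ hVseg => ?_⟩
  obtain ⟨a, b, ha, hb, hab, hsum⟩ := hVseg
  rcases eq_or_ne x₁ x₂ with heq | hne
  · subst heq
    have : x₁ = V := by
      rw [← hsum, ← add_smul, hab, one_smul]
    exact ⟨this, this⟩
  · exfalso
    have hfx1 : f x₁ ≤ c := hle _ h₁
    have hfx2 : f x₂ ≤ c := hle _ h₂
    have hcomb : a * f x₁ + b * f x₂ = c := by
      have := congrArg f hsum
      simpa [map_add, map_smul, hfV] using this
    have habc : a * c + b * c = c := by rw [← add_mul, hab, one_mul]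
    have hfx1' : f x₁ = c := by
      by_contra h
      have h' : f x₁ < c := lt_of_le_of_ne hfx1 h
      nlinarith [mul_lt_mul_of_pos_left h' ha, mul_le_mul_of_nonneg_left hfx2 hb.le,
        mul_le_mul_of_nonneg_left hfx1 ha.le]
    have hfx2' : f x₂ = c := by
      by_contra h
      have h' : f x₂ < c := lt_of_le_of_ne hfx2 h
      nlinarith [mul_lt_mul_of_pos_left h' hb, mul_le_mul_of_nonneg_left hfx1 ha.le,
        mul_le_mul_of_nonneg_left hfx2 hb.le]
    -- the three points x₁, x₂, W are affinely independent
    set pts : Fin 3 → Pl := ![x₁, x₂, W] with hpts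
    have hindep : AffineIndependent ℝ pts := by
      rw [affineIndependent_iff_not_collinear]
      intro hcol
      have h0 : x₁ ∈ Set.range pts := ⟨0, rfl⟩
      rw [collinear_iff_of_mem h0] at hcol
      obtain ⟨v, hv⟩ := hcol
      obtain ⟨r, hr⟩ := hv x₂ ⟨1, rfl⟩
      obtain ⟨s, hs⟩ := hv W ⟨2, rfl⟩
      have hr0 : r ≠ 0 := by
        rintro rfl
        simp at hr
        exact hne.symm hr
      have hfv : f v = 0 := by
        have h2 := congrArg f hr
        simp only [vadd_eq_add, map_add, map_smul, smul_eq_mul, hfx1', hfx2'] at h2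
        have h3 : r * f v = 0 := by linarith
        rcases mul_eq_zero.mp h3 with h | h
        · exact absurd h hr0
        · exact h
      have : f W = c := by
        have := congrArg f hs
        simpa [map_add, map_smul, hfv, hfx1'] using this
      linarith
    have htop : affineSpan ℝ (Set.range pts) = ⊤ := by
      rw [hindep.affineSpan_eq_top_iff_card_eq_finrank_add_one]
      simp
    set B : AffineBasis (Fin 3) ℝ Pl := ⟨pts, hindep, htop⟩ with hB
    -- the midpoint p of V and W lies in the interior of the triangle
    set w : Fin 3 → ℝ := ![a/2, b/2, 1/2] with hw
    have hwsum : Finset.univ.sum w = 1 := by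
      simp [hw, Fin.sum_univ_three]
      linarith
    set p : Pl := Finset.univ.affineCombination ℝ pts w with hp
    have hp' : p = (1/2 : ℝ) • V + (1/2 : ℝ) • W := by
      rw [hp, Finset.affineCombination_eq_linear_combination _ _ _ hwsum, ← hsum]
      simp [hw, hpts, Fin.sum_univ_three, smul_smul, smul_add]
      module
    have hpint : p ∈ interior (convexHull ℝ (Set.range pts)) := by
      have hBp : ⇑B = pts := rfl
      rw [← hBp, B.interior_convexHull]
      intro i
      show 0 < B.coord i p
      have hc := B.coord_apply_combination_of_mem (Finset.mem_univ i) hwsum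
      have hBc : (Finset.univ.affineCombination ℝ pts w) =
          (Finset.univ.affineCombination ℝ (⇑B) w) := rfl
      rw [hp, hBc, hc]
      fin_cases i <;> simp [hw] <;> linarith
    have hpK : p ∈ interior K := by
      refine interior_mono (convexHull_min ?_ (convex_convexHull ℝ _)) hpint
      rintro x ⟨i, rfl⟩
      fin_cases i
      · exact h₁
      · exact h₂
      · exact hWK
    have hpfr : p ∈ frontier K := by
      apply hedge
      rw [hp']
      exact ⟨1/2, 1/2, by norm_num, by norm_num, by norm_num, rfl⟩
    exact hpfr.2 hpK
end
end
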